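/- (Continuity of the integral parameter.) For s ≥ 0 let μ(s) > 0 be the unique solution of the fixed-point equation (8) with parameter s. Then the function s ↦ μ(s) is continuous on [0, ∞), and μ(0) = exp(−ν²·T/(2·σ²)). -/

import Mathlib

/-!
The right-hand side of (8) is antitone in `μ` and, for fixed `μ > 0`, continuous in `s`.
A fixed point of an antitone map `g` lies strictly below every `m` with `g m < m` and strictly
above every `m` with `m < g m`. Around `μ(s₀)` both kinds of `m` exist arbitrarily close, and
by continuity in `s` these strict inequalities persist for `s` near `s₀`, trapping `μ(s)`.
-/

open Set Filter Topology Function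

section FixedPoint

variable {X α : Type*} [LinearOrder α]

theorem AntitoneOn.lt_of_isFixedPt_of_map_lt {g : α → α} {U : Set α} {x m : α}
    (hg : AntitoneOn g U) (hx : x ∈ U) (hm : m ∈ U) (hfix : IsFixedPt g x) (h : g m < m) :
    x < m :=
  lt_of_not_ge fun hmx => (h.trans_le hmx).not_ge (hfix.eq ▸ hg hm hx hmx)

theorem AntitoneOn.lt_of_isFixedPt_of_lt_map {g : α → α} {U : Set α} {x m : α}
    (hg : AntitoneOn g U) (hx : x ∈ U) (hm : m ∈ U) (hfix : IsFixedPt g x) (h : m < g m) :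
    m < x :=
  lt_of_not_ge fun hxm => (h.trans_le (hfix.eq ▸ hg hx hm hxm)).not_ge hxm

variable [TopologicalSpace X] [TopologicalSpace α] [OrderTopology α] [DenselyOrdered α]
  {G : X → α → α} {f : X → α} {S : Set X} {U : Set α} {s₀ : X}

theorem eventually_const_lt_of_isFixedPt_antitoneOn (hU : IsOpen U)
    (hcont : ∀ m ∈ U, ContinuousWithinAt (fun s => G s m) S s₀)
    (hanti : ∀ s ∈ S, AntitoneOn (G s) U) (hfix : ∀ s ∈ S, IsFixedPt (G s) (f s))
    (hfU : ∀ s ∈ S, f s ∈ U) (hs₀ : s₀ ∈ S) {a : α} (ha : a < f s₀) :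
    ∀ᶠ s in 𝓝[S] s₀, a < f s := by
  obtain ⟨l, ⟨hal, hlf⟩, hlU⟩ := exists_Ioc_subset_of_mem_nhds' (hU.mem_nhds (hfU s₀ hs₀)) ha
  obtain ⟨m, hlm, hmf⟩ := exists_between hlf
  have hmU : m ∈ U := hlU ⟨hlm, hmf.le⟩
  have hm_lt_map : m < G s₀ m :=
    hmf.trans_le ((hfix s₀ hs₀).eq ▸ hanti s₀ hs₀ hmU (hfU s₀ hs₀) hmf.le)
  filter_upwards [self_mem_nhdsWithin, (hcont m hmU).eventually_const_lt hm_lt_map] with s hs hms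
  exact (hal.trans_lt hlm).trans
    ((hanti s hs).lt_of_isFixedPt_of_lt_map (hfU s hs) hmU (hfix s hs) hms)

theorem eventually_lt_const_of_isFixedPt_antitoneOn (hU : IsOpen U)
    (hcont : ∀ m ∈ U, ContinuousWithinAt (fun s => G s m) S s₀)
    (hanti : ∀ s ∈ S, AntitoneOn (G s) U) (hfix : ∀ s ∈ S, IsFixedPt (G s) (f s))
    (hfU : ∀ s ∈ S, f s ∈ U) (hs₀ : s₀ ∈ S) {b : α} (hb : f s₀ < b) :
    ∀ᶠ s in 𝓝[S] s₀, f s < b := by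
  obtain ⟨u, ⟨hfu, hub⟩, huU⟩ := exists_Ico_subset_of_mem_nhds' (hU.mem_nhds (hfU s₀ hs₀)) hb
  obtain ⟨m, hfm, hmu⟩ := exists_between hfu
  have hmU : m ∈ U := huU ⟨hfm.le, hmu⟩
  have hmap_lt_m : G s₀ m < m :=
    ((hfix s₀ hs₀).eq ▸ hanti s₀ hs₀ (hfU s₀ hs₀) hmU hfm.le).trans_lt hfm
  filter_upwards [self_mem_nhdsWithin, (hcont m hmU).eventually_lt_const hmap_lt_m] with s hs hms
  exact ((hanti s hs).lt_of_isFixedPt_of_map_lt (hfU s hs) hmU (hfix s hs) hms).trans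
    (hmu.trans_le hub)

theorem continuousWithinAt_of_isFixedPt_antitoneOn (hU : IsOpen U)
    (hcont : ∀ m ∈ U, ContinuousWithinAt (fun s => G s m) S s₀)
    (hanti : ∀ s ∈ S, AntitoneOn (G s) U) (hfix : ∀ s ∈ S, IsFixedPt (G s) (f s))
    (hfU : ∀ s ∈ S, f s ∈ U) (hs₀ : s₀ ∈ S) : ContinuousWithinAt f S s₀ :=
  tendsto_order.2
    ⟨fun _ ha => eventually_const_lt_of_isFixedPt_antitoneOn hU hcont hanti hfix hfU hs₀ ha,
      fun _ hb => eventually_lt_const_of_isFixedPt_antitoneOn hU hcont hanti hfix hfU hs₀ hb⟩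

end FixedPoint

/-- The right-hand side of (8), as a function of `s` and `μ = m`. -/
noncomputable def integralParameterMap (ν σ T αl α s m : ℝ) : ℝ :=
  Real.exp (((α / αl - 1) ^ 2 * s ^ 2 / (α * σ ^ 2 * m + s) ^ 2 - 1) * ν ^ 2 * T / (2 * σ ^ 2))

section IntegralParameterMap

variable {ν σ T αl α : ℝ}

theorem antitoneOn_integralParameterMap (hα : 0 < α) (hσ : σ ≠ 0) (hT : 0 ≤ T) {s : ℝ}
    (hs : 0 ≤ s) : AntitoneOn (integralParameterMap ν σ T αl α s) (Ioi 0) := by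
  intro m₁ (hm₁ : 0 < m₁) m₂ _ hm
  unfold integralParameterMap
  gcongr

theorem continuousAt_integralParameterMap (hα : 0 < α) (hσ : σ ≠ 0) {m : ℝ} (hm : 0 < m)
    {s₀ : ℝ} (hs₀ : 0 ≤ s₀) : ContinuousAt (integralParameterMap ν σ T αl α · m) s₀ := by
  have hden : (α * σ ^ 2 * m + s₀) ^ 2 ≠ 0 := by positivity
  unfold integralParameterMap
  fun_prop (disch := exact hden)

@[simp]
theorem integralParameterMap_zero_left (m : ℝ) :
    integralParameterMap ν σ T αl α 0 m = Real.exp (-(ν ^ 2 * T) / (2 * σ ^ 2)) := by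
  simp [integralParameterMap, neg_div]

end IntegralParameterMap

theorem integral_parameter_continuous_general
    (ν σ T αl α : ℝ) (hσ : 0 < σ) (hT : 0 < T)
    (hα : 0 < α)
    (μ : ℝ → ℝ)
    (hμ : ∀ s : ℝ, 0 ≤ s → 0 < μ s ∧
      μ s = Real.exp (((α / αl - 1) ^ 2 * s ^ 2 / (α * σ ^ 2 * μ s + s) ^ 2 - 1)
        * ν ^ 2 * T / (2 * σ ^ 2))) :
    ContinuousOn μ (Set.Ici 0) ∧ μ 0 = Real.exp (-(ν ^ 2 * T) / (2 * σ ^ 2)) := by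
  have hfix : ∀ s ∈ Ici (0 : ℝ), IsFixedPt (integralParameterMap ν σ T αl α s) (μ s) :=
    fun s hs => (hμ s hs).2.symm
  refine ⟨fun s₀ hs₀ => continuousWithinAt_of_isFixedPt_antitoneOn isOpen_Ioi
    (fun m hm => (continuousAt_integralParameterMap hα hσ.ne' hm hs₀).continuousWithinAt)
    (fun s hs => antitoneOn_integralParameterMap hα hσ.ne' hT.le hs) hfix
    (fun s hs => (hμ s hs).1) hs₀, ?_⟩
  rw [← (hfix 0 self_mem_Ici).eq, integralParameterMap_zero_left]

/-- Continuity of the integral parameter on [0, ∞), and its value at 0. -/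
theorem integral_parameter_continuous
    (ν σ T αl α : ℝ) (hν : 0 < ν) (hσ : 0 < σ) (hT : 0 < T)
    (hαl : 0 < αl) (hα : 0 < α)
    (μ : ℝ → ℝ)
    (hμ : ∀ s : ℝ, 0 ≤ s → 0 < μ s ∧
      μ s = Real.exp (((α / αl - 1) ^ 2 * s ^ 2 / (α * σ ^ 2 * μ s + s) ^ 2 - 1)
        * ν ^ 2 * T / (2 * σ ^ 2))) :
    ContinuousOn μ (Set.Ici 0) ∧ μ 0 = Real.exp (-(ν ^ 2 * T) / (2 * σ ^ 2)) :=
  integral_parameter_continuous_general ν σ T αl α hσ hT hα μ hμ
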